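/- For every integer l ≥ 1 and all sufficiently small ε > 0, the star-like graph G_{l,ε} has highway dimension 2 according to the ball-intersection definition (for every r > 0 and every ball B_{2r}(t) there are at most 2 vertices hitting all shortest paths of length in (r, 2r] intersecting B_{2r}(t)). Moreover, for the scale r = 2, the set {v, w_1, …, w_l} is a minimal, locally 2-sparse shortest path cover for scale r (with c = 4), it contains l + 1 hubs, and each of these hubs is at distance at most 2r from some vertex of the ball B_{2r}(v). -/

import Mathlib

/-!
`G_{l,ε}` is a tree, so its shortest-path metric is the explicit tree metric `treeDist`: walks
give the upper bound, and the lower bound holds because `treeDist c ·` is 1-Lipschitz along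
edges. Every edge away from the centre `v` has the hub `w_i` of its branch as an endpoint, so
every nontrivial path avoiding `v` passes through that hub. Hence `{v, w_1, …, w_l}` covers all
paths, and near a vertex `t` of branch `k` the two hubs `v, w_k` suffice: a path inside another
branch (of length at most `2 + 3ε`) lies at distance at least twice its length from `t`, so it
cannot meet `B_{2r}(t)` while being longer than `r`. The edge `v u_i` and the path
`x_i w_i y_i` of length `2 + ε` each meet only one hub, which gives minimality.
-/

open SimpleGraph

universe u

variable {V : Type u}

/-- The length of a walk in a graph `G` with edge lengths `len`. -/
noncomputable def wlen {G : SimpleGraph V} (len : V → V → ℝ) {u v : V} (w : G.Walk u v) : ℝ :=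
  (w.darts.map (fun e => len e.toProd.1 e.toProd.2)).sum

/-- A walk is a *shortest path* (w.r.t. the shortest-path metric `d`) if it is a
path whose total length equals the distance between its endpoints. -/
def IsShortestPath {G : SimpleGraph V} (len d : V → V → ℝ) {u v : V}
    (w : G.Walk u v) : Prop :=
  w.IsPath ∧ wlen len w = d u v

/-- `d` is the shortest-path metric of the graph `G` with edge lengths `len`:
it is a lower bound on the length of every walk, and for every pair of vertices it
is attained by some path (a shortest path). -/
def IsShortestPathMetric (G : SimpleGraph V) (len d : V → V → ℝ) : Prop :=
  (∀ (u v : V) (w : G.Walk u v), d u v ≤ wlen len w) ∧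
  (∀ u v : V, ∃ w : G.Walk u v, IsShortestPath len d w)

/-- The closed ball `B_r(v)` of radius `r` around `v` (w.r.t. `d`). -/
def cball (d : V → V → ℝ) (v : V) (r : ℝ) : Set V := {u | d u v ≤ r}

/-- A *shortest path cover* for scale `r` (with parameter `c`): a set of hubs
hitting every shortest path of length in `(r, c*r/2]`. -/
def IsSPC (G : SimpleGraph V) (len d : V → V → ℝ) (c r : ℝ) (H : Set V) : Prop :=
  ∀ (u v : V) (w : G.Walk u v), IsShortestPath len d w →
    r < wlen len w → wlen len w ≤ c * r / 2 → ∃ h ∈ H, h ∈ w.support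

/-- A minimal shortest path cover: no proper subset is a shortest path cover. -/
def IsMinimalSPC (G : SimpleGraph V) (len d : V → V → ℝ) (c r : ℝ) (H : Set V) : Prop :=
  IsSPC G len d c r H ∧ ∀ H' : Set V, H' ⊂ H → ¬ IsSPC G len d c r H'

/-- `H` is locally `s`-sparse for scale `r`: every ball of radius `c*r/2` contains
at most `s` vertices of `H`. -/
def LocallySparse (d : V → V → ℝ) (c r : ℝ) (s : ℕ) (H : Set V) : Prop :=
  ∀ v : V, (H ∩ cball d v (c * r / 2)).ncard ≤ s

/-- Definition 1: the highway dimension of `G` is at most `k` if for every scale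
`r > 0` and every ball of radius `c*r`, there are at most `k` vertices in the ball
hitting all shortest paths of length more than `r` that lie inside the ball. -/
def HighwayDimLE (G : SimpleGraph V) (len d : V → V → ℝ) (c : ℝ) (k : ℕ) : Prop :=
  ∀ r : ℝ, 0 < r → ∀ v : V, ∃ H : Set V, H ⊆ cball d v (c * r) ∧ H.ncard ≤ k ∧
    ∀ (a b : V) (w : G.Walk a b), IsShortestPath len d w →
      (∀ x ∈ w.support, x ∈ cball d v (c * r)) → r < wlen len w →
      ∃ h ∈ H, h ∈ w.support

/-- The vertex set of the star-like graph `G_{l,ε}`: `none` is the centre `v`, and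
for each `i`, `some (i, 0) = u_i`, `some (i, 1) = w_i`, `some (i, 2) = x_i`,
`some (i, 3) = y_i`. -/
abbrev StarV (l : ℕ) := Option (Fin l × Fin 4)

/-- The star-like graph: edges `{v, u_i}`, `{u_i, w_i}`, `{w_i, x_i}`, `{w_i, y_i}`. -/
def starlike (l : ℕ) : SimpleGraph (StarV l) where
  Adj a b := ∃ i : Fin l,
    (a = none ∧ b = some (i, 0)) ∨ (b = none ∧ a = some (i, 0)) ∨
    (a = some (i, 0) ∧ b = some (i, 1)) ∨ (a = some (i, 1) ∧ b = some (i, 0)) ∨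
    (a = some (i, 1) ∧ b = some (i, 2)) ∨ (a = some (i, 2) ∧ b = some (i, 1)) ∨
    (a = some (i, 1) ∧ b = some (i, 3)) ∨ (a = some (i, 3) ∧ b = some (i, 1))
  symm := by
    constructor
    rintro a b ⟨i, h⟩
    exact ⟨i, by tauto⟩
  loopless := by
    constructor
    rintro a ⟨i, h⟩
    rcases h with ⟨h₁, h₂⟩ | ⟨h₁, h₂⟩ | ⟨h₁, h₂⟩ | ⟨h₁, h₂⟩ | ⟨h₁, h₂⟩ | ⟨h₁, h₂⟩ |
      ⟨h₁, h₂⟩ | ⟨h₁, h₂⟩ <;> simp_all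

/-- The edge lengths of the star-like graph: `{v, u_i}` has length `4`,
`{u_i, w_i}` has length `2ε`, `{w_i, x_i}` has length `1` and `{w_i, y_i}` has
length `1 + ε`. -/
noncomputable def starlikeLen (ε : ℝ) (l : ℕ) : StarV l → StarV l → ℝ :=
  fun a b =>
    match a, b with
    | none, _ => 4
    | _, none => 4
    | some (_, j), some (_, j') =>
      if (j = 0 ∧ j' = 1) ∨ (j = 1 ∧ j' = 0) then 2 * ε
      else if (j = 1 ∧ j' = 2) ∨ (j = 2 ∧ j' = 1) then 1
      else 1 + ε

/-- The shortest path cover `{v, w_1, …, w_l}` for scale `r = 2` in `G_{l,ε}`. -/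
def starlikeSPC (l : ℕ) : Set (StarV l) :=
  insert none {h : StarV l | ∃ i : Fin l, h = some (i, 1)}

section WalkLength

variable {G : SimpleGraph V} {len : V → V → ℝ}

@[simp]
lemma wlen_nil (u : V) : wlen len (Walk.nil : G.Walk u u) = 0 := by
  simp [wlen]

@[simp]
lemma wlen_cons {u v w : V} (h : G.Adj u v) (p : G.Walk v w) :
    wlen len (Walk.cons h p) = len u v + wlen len p := by
  simp [wlen]

lemma wlen_append {u v w : V} (p : G.Walk u v) (q : G.Walk v w) :
    wlen len (p.append q) = wlen len p + wlen len q := by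
  simp [wlen, Walk.darts_append]

lemma wlen_reverse (hlen : ∀ a b, len a b = len b a) {u v : V} (p : G.Walk u v) :
    wlen len p.reverse = wlen len p := by
  simp only [wlen, Walk.darts_reverse, List.map_reverse, List.sum_reverse, List.map_map]
  exact congrArg List.sum (List.map_congr_left fun _ _ => hlen _ _)

lemma not_nil_of_wlen_pos {u v : V} {p : G.Walk u v} (hp : 0 < wlen len p) : ¬ p.Nil := by
  cases p with
  | nil => simp at hp
  | cons => exact Walk.not_nil_cons

lemma abs_sub_le_wlen (f : V → ℝ) (hf : ∀ a b, G.Adj a b → |f a - f b| ≤ len a b)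
    {u v : V} (p : G.Walk u v) : |f u - f v| ≤ wlen len p := by
  induction p with
  | nil => simp
  | @cons a c b h p ih =>
    rw [wlen_cons]
    calc |f a - f b| ≤ |f a - f c| + |f c - f b| := abs_sub_le _ _ _
      _ ≤ len a c + wlen len p := add_le_add (hf _ _ h) ih

end WalkLength

namespace IsShortestPathMetric

variable {G : SimpleGraph V} {len d : V → V → ℝ}

lemma dist_triangle (hd : IsShortestPathMetric G len d) (a x b : V) :
    d a b ≤ d a x + d x b := by
  obtain ⟨p, -, hp⟩ := hd.2 a x
  obtain ⟨q, -, hq⟩ := hd.2 x b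
  simpa [wlen_append, hp, hq] using hd.1 a b (p.append q)

lemma dist_comm (hd : IsShortestPathMetric G len d) (hlen : ∀ a b, len a b = len b a)
    (a b : V) : d a b = d b a := by
  have key : ∀ a b, d a b ≤ d b a := fun a b => by
    obtain ⟨p, -, hp⟩ := hd.2 b a
    simpa [wlen_reverse hlen, hp] using hd.1 a b p.reverse
  exact (key a b).antisymm (key b a)

lemma dist_add_dist_of_mem_support (hd : IsShortestPathMetric G len d) {a b x : V}
    {w : G.Walk a b} (hw : IsShortestPath len d w) (hx : x ∈ w.support) :
    d a x + d x b = d a b := by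
  obtain ⟨p, q, rfl⟩ := Walk.mem_support_iff_exists_append.mp hx
  have hpq : wlen len p + wlen len q = d a b := by rw [← wlen_append]; exact hw.2
  linarith [hd.1 _ _ p, hd.1 _ _ q, hd.dist_triangle a x b]

/-- Every vertex of a shortest `a`–`b` path is at distance at least the Gromov product
`(a | b)_t` from `t`. -/
lemma dist_add_dist_sub_le_two_mul (hd : IsShortestPathMetric G len d)
    (hlen : ∀ a b, len a b = len b a) {a b x : V} {w : G.Walk a b}
    (hw : IsShortestPath len d w) (hx : x ∈ w.support) (t : V) :
    d a t + d t b - d a b ≤ 2 * d x t := by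
  linarith [hd.dist_add_dist_of_mem_support hw hx, hd.dist_triangle a x t,
    hd.dist_triangle t x b, hd.dist_comm hlen t x]

end IsShortestPathMetric

lemma isMinimalSPC_of_forall_exists {G : SimpleGraph V} {len d : V → V → ℝ} {c r : ℝ}
    {H : Set V} (hH : IsSPC G len d c r H)
    (hpriv : ∀ e ∈ H, ∃ (a b : V) (w : G.Walk a b), IsShortestPath len d w ∧
      r < wlen len w ∧ wlen len w ≤ c * r / 2 ∧ ∀ h ∈ H, h ∈ w.support → h = e) :
    IsMinimalSPC G len d c r H := by
  refine ⟨hH, fun H' hH' hspc => ?_⟩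
  obtain ⟨e, heH, heH'⟩ := Set.exists_of_ssubset hH'
  obtain ⟨a, b, w, hw, hlo, hhi, honly⟩ := hpriv e heH
  obtain ⟨h, hh, hsupp⟩ := hspc a b w hw hlo hhi
  exact heH' (honly h (hH'.1 hh) hsupp ▸ hh)

namespace Starlike

variable {l : ℕ} {ε : ℝ}

/-- The distance from the centre to `u_i, w_i, x_i, y_i` (`j = 0, 1, 2, 3`). -/
noncomputable def depth (ε : ℝ) : Fin 4 → ℝ
  | 0 => 4
  | 1 => 4 + 2 * ε
  | 2 => 5 + 2 * ε
  | 3 => 5 + 3 * ε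

/-- The last common vertex of the paths from the centre to two vertices of one branch. -/
def meet (j j' : Fin 4) : Fin 4 :=
  if j = 0 ∨ j' = 0 then 0 else if j = j' then j else 1

/-- The tree metric of `G_{l,ε}`: two branches meet only at the centre. -/
noncomputable def treeDist (ε : ℝ) : StarV l → StarV l → ℝ
  | none, none => 0
  | none, some (_, j) | some (_, j), none => depth ε j
  | some (i, j), some (i', j') =>
    if i = i' then depth ε j + depth ε j' - 2 * depth ε (meet j j') else depth ε j + depth ε j'

lemma starlikeLen_comm (a b : StarV l) : starlikeLen ε l a b = starlikeLen ε l b a := by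
  rcases a with _ | ⟨i, j⟩ <;> rcases b with _ | ⟨i', j'⟩ <;> simp only [starlikeLen]
  split_ifs <;> tauto

lemma four_le_depth (hε : 0 ≤ ε) (j : Fin 4) : 4 ≤ depth ε j := by
  fin_cases j <;> simp [depth] <;> linarith

@[simp]
lemma treeDist_self (a : StarV l) : treeDist ε a a = 0 := by
  rcases a with _ | ⟨i, j⟩
  · rfl
  · fin_cases j <;> simp [treeDist, meet] <;> ring

lemma abs_treeDist_sub_le (hε : 0 ≤ ε) (c : StarV l) {a b : StarV l}
    (h : (starlike l).Adj a b) : |treeDist ε c a - treeDist ε c b| ≤ starlikeLen ε l a b := by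
  rw [abs_sub_le_iff]
  obtain ⟨i, h⟩ := h
  rcases c with _ | ⟨k, m⟩
  · rcases h with ⟨rfl, rfl⟩ | ⟨rfl, rfl⟩ | ⟨rfl, rfl⟩ | ⟨rfl, rfl⟩ | ⟨rfl, rfl⟩ | ⟨rfl, rfl⟩ |
      ⟨rfl, rfl⟩ | ⟨rfl, rfl⟩ <;>
      constructor <;> simp [treeDist, depth, starlikeLen] <;> linarith
  · rcases h with ⟨rfl, rfl⟩ | ⟨rfl, rfl⟩ | ⟨rfl, rfl⟩ | ⟨rfl, rfl⟩ | ⟨rfl, rfl⟩ | ⟨rfl, rfl⟩ |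
      ⟨rfl, rfl⟩ | ⟨rfl, rfl⟩ <;> by_cases hk : k = i <;> fin_cases m <;>
      constructor <;> simp [treeDist, depth, meet, starlikeLen, hk] <;> linarith

lemma adj_u_center (i : Fin l) : (starlike l).Adj (some (i, 0)) none := ⟨i, by tauto⟩
lemma adj_w_u (i : Fin l) : (starlike l).Adj (some (i, 1)) (some (i, 0)) := ⟨i, by tauto⟩
lemma adj_x_w (i : Fin l) : (starlike l).Adj (some (i, 2)) (some (i, 1)) := ⟨i, by tauto⟩
lemma adj_y_w (i : Fin l) : (starlike l).Adj (some (i, 3)) (some (i, 1)) := ⟨i, by tauto⟩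

def walkToCenter (i : Fin l) : (j : Fin 4) → (starlike l).Walk (some (i, j)) none
  | 0 => .cons (adj_u_center i) .nil
  | 1 => .cons (adj_w_u i) (walkToCenter i 0)
  | 2 => .cons (adj_x_w i) (walkToCenter i 1)
  | 3 => .cons (adj_y_w i) (walkToCenter i 1)

def walkToHub (i : Fin l) : (j : Fin 4) → (starlike l).Walk (some (i, j)) (some (i, 1))
  | 0 => .cons (adj_w_u i).symm .nil
  | 1 => .nil
  | 2 => .cons (adj_x_w i) .nil
  | 3 => .cons (adj_y_w i) .nil

lemma wlen_walkToCenter (i : Fin l) (j : Fin 4) :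
    wlen (starlikeLen ε l) (walkToCenter i j) = treeDist ε (some (i, j)) none := by
  fin_cases j <;> simp [walkToCenter, starlikeLen, treeDist, depth] <;> ring

lemma wlen_walkToHub (i : Fin l) (j : Fin 4) :
    wlen (starlikeLen ε l) (walkToHub i j) = treeDist ε (some (i, j)) (some (i, 1)) := by
  fin_cases j <;> simp [walkToHub, starlikeLen, treeDist, depth, meet] <;> ring

lemma dist_le_treeDist {d : StarV l → StarV l → ℝ}
    (hd : IsShortestPathMetric (starlike l) (starlikeLen ε l) d) (a b : StarV l) :
    d a b ≤ treeDist ε a b := by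
  have hrev : ∀ {u v} (p : (starlike l).Walk u v), wlen (starlikeLen ε l) p.reverse = wlen _ p :=
    wlen_reverse starlikeLen_comm
  by_cases hab : a = b
  · subst hab
    simpa using hd.1 a a .nil
  rcases a with _ | ⟨i, j⟩ <;> rcases b with _ | ⟨i', j'⟩
  · exact absurd rfl hab
  · simpa [hrev, wlen_walkToCenter, treeDist] using hd.1 _ _ (walkToCenter i' j').reverse
  · simpa [wlen_walkToCenter, treeDist] using hd.1 _ _ (walkToCenter i j)
  · by_cases hi : i = i'
    · subst hi
      refine (hd.1 _ _ ((walkToHub i j).append (walkToHub i j').reverse)).trans_eq ?_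
      rw [wlen_append, hrev, wlen_walkToHub, wlen_walkToHub]
      fin_cases j <;> fin_cases j' <;> simp [treeDist, depth, meet] at hab ⊢ <;> ring
    · simpa [wlen_append, hrev, wlen_walkToCenter, treeDist, hi] using
        hd.1 _ _ ((walkToCenter i j).append (walkToCenter i' j').reverse)

lemma dist_eq_treeDist (hε : 0 ≤ ε) {d : StarV l → StarV l → ℝ}
    (hd : IsShortestPathMetric (starlike l) (starlikeLen ε l) d) (a b : StarV l) :
    d a b = treeDist ε a b := by
  refine (dist_le_treeDist hd a b).antisymm ?_
  obtain ⟨w, -, hw⟩ := hd.2 a b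
  calc treeDist ε a b ≤ |treeDist ε a a - treeDist ε a b| := by simpa using le_abs_self _
    _ ≤ wlen (starlikeLen ε l) w := abs_sub_le_wlen _ (fun _ _ => abs_treeDist_sub_le hε a) w
    _ = d a b := hw

lemma treeDist_le_of_same_branch (hε : 0 ≤ ε) (i : Fin l) (j j' : Fin 4) :
    treeDist ε (some (i, j)) (some (i, j')) ≤ 2 + 3 * ε := by
  fin_cases j <;> fin_cases j' <;> simp [treeDist, depth, meet] <;> linarith

lemma eight_le_treeDist_of_ne {i k : Fin l} (hε : 0 ≤ ε) (hik : i ≠ k) (j m : Fin 4) :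
    8 ≤ treeDist ε (some (i, j)) (some (k, m)) := by
  simp only [treeDist, hik, if_false]
  linarith [four_le_depth hε j, four_le_depth hε m]

lemma treeDist_comm (a b : StarV l) : treeDist ε a b = treeDist ε b a := by
  rcases a with _ | ⟨i, j⟩ <;> rcases b with _ | ⟨k, m⟩ <;> simp only [treeDist]
  by_cases hik : i = k
  · subst hik
    fin_cases j <;> fin_cases m <;> simp [meet] <;> ring
  · simp [hik, Ne.symm hik, add_comm]

def branchHub : StarV l → StarV l
  | none => none
  | some (i, _) => some (i, 1)

lemma branchHub_eq_some_iff {a : StarV l} {i : Fin l} :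
    branchHub a = some (i, 1) ↔ ∃ j, a = some (i, j) := by
  rcases a with _ | ⟨k, m⟩ <;> simp [branchHub, eq_comm]

lemma mem_starlikeSPC_iff {a : StarV l} : a ∈ starlikeSPC l ↔ branchHub a = a := by
  rcases a with _ | ⟨i, j⟩ <;> simp [starlikeSPC, branchHub, eq_comm]

lemma eq_one_of_some_mem_starlikeSPC {i : Fin l} {j : Fin 4} (h : some (i, j) ∈ starlikeSPC l) :
    j = 1 := by
  simpa [mem_starlikeSPC_iff, branchHub, eq_comm] using h

/-- Measured from a vertex `t` outside the branch of `a` and `b`, the Gromov product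
`(a | b)_t` is at least `2 d(a, b)`. -/
lemma five_mul_treeDist_le (hε₀ : 0 ≤ ε) (hε : ε ≤ 1 / 3) {i : Fin l} (j j' : Fin 4)
    {t : StarV l} (ht : branchHub t ≠ some (i, 1)) :
    5 * treeDist ε (some (i, j)) (some (i, j')) ≤
      treeDist ε (some (i, j)) t + treeDist ε t (some (i, j')) := by
  rcases t with _ | ⟨k, m⟩
  · fin_cases j <;> fin_cases j' <;> simp [treeDist, depth, meet] <;> linarith
  · have hik : i ≠ k := fun h => ht (by simp [branchHub, h])
    rw [treeDist_comm (some (k, m))]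
    linarith [treeDist_le_of_same_branch hε₀ i j j', eight_le_treeDist_of_ne hε₀ hik j m,
      eight_le_treeDist_of_ne hε₀ hik j' m]

lemma four_lt_treeDist_hub (hε : 0 < ε) {i : Fin l} {t : StarV l}
    (ht : branchHub t ≠ some (i, 1)) : 4 < treeDist ε (some (i, 1)) t := by
  rcases t with _ | ⟨k, m⟩
  · simp [treeDist, depth, hε]
  · have hik : i ≠ k := fun h => ht (by simp [branchHub, h])
    linarith [eight_le_treeDist_of_ne hε.le hik 1 m]

lemma branchHub_eq_of_adj {a b : StarV l} (h : (starlike l).Adj a b) (ha : a ≠ none)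
    (hb : b ≠ none) : branchHub b = branchHub a := by
  obtain ⟨i, h⟩ := h
  grind [branchHub]

lemma eq_branchHub_or_eq_branchHub_of_adj {a b : StarV l} (h : (starlike l).Adj a b)
    (ha : a ≠ none) (hb : b ≠ none) : a = branchHub a ∨ b = branchHub a := by
  obtain ⟨i, h⟩ := h
  grind [branchHub]

lemma branchHub_eq_of_mem_support {a b : StarV l} {w : (starlike l).Walk a b}
    (hw : none ∉ w.support) {x : StarV l} (hx : x ∈ w.support) : branchHub x = branchHub a := by
  induction w with
  | nil => simp_all
  | @cons a c b h p ih =>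
    rw [Walk.support_cons, List.mem_cons, not_or] at hw
    rw [Walk.support_cons, List.mem_cons] at hx
    rcases hx with rfl | hx
    · rfl
    · rw [ih hw.2 hx, branchHub_eq_of_adj h (Ne.symm hw.1)
        (fun hc => hw.2 (hc ▸ p.start_mem_support))]

lemma branchHub_mem_support {a b : StarV l} {w : (starlike l).Walk a b} (hw : none ∉ w.support)
    (hnil : ¬ w.Nil) : branchHub a ∈ w.support := by
  cases w with
  | nil => exact absurd Walk.Nil.nil hnil
  | @cons a c b h p =>
    rw [Walk.support_cons, List.mem_cons, not_or] at hw
    rcases eq_branchHub_or_eq_branchHub_of_adj h (Ne.symm hw.1)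
        (fun hc => hw.2 (hc ▸ p.start_mem_support)) with ha | hc
    · exact ha ▸ (Walk.cons h p).start_mem_support
    · exact List.mem_cons_of_mem _ (hc ▸ p.start_mem_support)

variable {d : StarV l → StarV l → ℝ}

lemma center_or_branchHub_mem_support (hε₀ : 0 ≤ ε) (hε : ε ≤ 1 / 3)
    (hd : IsShortestPathMetric (starlike l) (starlikeLen ε l) d) {r : ℝ} (hr : 0 < r)
    (t : StarV l) {a b : StarV l} {w : (starlike l).Walk a b}
    (hw : IsShortestPath (starlikeLen ε l) d w) (hlen : r < wlen (starlikeLen ε l) w)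
    (hnear : ∃ x ∈ w.support, x ∈ cball d t (2 * r)) :
    none ∈ w.support ∨ branchHub t ∈ w.support := by
  by_cases hv : none ∈ w.support
  · exact Or.inl hv
  have hhub := branchHub_mem_support hv (not_nil_of_wlen_pos (hr.trans hlen))
  obtain ⟨⟨i, j⟩, rfl⟩ : ∃ a' : Fin l × Fin 4, a = some a' :=
    Option.ne_none_iff_exists'.mp fun ha => hv (ha ▸ w.start_mem_support)
  by_cases ht : branchHub t = some (i, 1)
  · exact Or.inr (ht ▸ hhub)
  exfalso
  obtain ⟨j', rfl⟩ := branchHub_eq_some_iff.mp (branchHub_eq_of_mem_support hv w.end_mem_support)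
  obtain ⟨x, hx, hxt : d x t ≤ 2 * r⟩ := hnear
  have hgromov := hd.dist_add_dist_sub_le_two_mul starlikeLen_comm hw hx t
  have hwlen := hw.2
  simp only [dist_eq_treeDist hε₀ hd] at hgromov hxt hwlen
  linarith [five_mul_treeDist_le hε₀ hε j j' ht]

lemma isSPC_starlikeSPC : IsSPC (starlike l) (starlikeLen ε l) d 4 2 (starlikeSPC l) := by
  intro a b w _ hlen _
  by_cases hv : none ∈ w.support
  · exact ⟨none, mem_starlikeSPC_iff.mpr rfl, hv⟩
  · refine ⟨branchHub a, ?_, branchHub_mem_support hv (not_nil_of_wlen_pos (by linarith))⟩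
    rcases a with _ | ⟨i, j⟩ <;> simp [mem_starlikeSPC_iff, branchHub]

lemma isMinimalSPC_starlikeSPC (hl : 1 ≤ l) (hε₀ : 0 < ε) (hε : ε ≤ 2)
    (hd : IsShortestPathMetric (starlike l) (starlikeLen ε l) d) :
    IsMinimalSPC (starlike l) (starlikeLen ε l) d 4 2 (starlikeSPC l) := by
  refine isMinimalSPC_of_forall_exists isSPC_starlikeSPC fun e he => ?_
  rcases e with _ | ⟨i, j⟩
  · refine ⟨none, some (⟨0, hl⟩, 0), .cons (adj_u_center _).symm .nil, ⟨by simp, ?_⟩,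
      by norm_num [starlikeLen], by norm_num [starlikeLen], ?_⟩
    · simp [dist_eq_treeDist hε₀.le hd, treeDist, depth, starlikeLen]
    · intro h hh hsupp
      simp only [Walk.support_cons, Walk.support_nil, List.mem_cons, List.not_mem_nil,
        or_false] at hsupp
      rcases hsupp with rfl | rfl <;> simp_all [mem_starlikeSPC_iff, branchHub]
  · obtain rfl : j = 1 := eq_one_of_some_mem_starlikeSPC he
    let xwy : (starlike l).Walk (some (i, 2)) (some (i, 3)) :=
      .cons (adj_x_w i) (.cons (adj_y_w i).symm .nil)
    have hlen : wlen (starlikeLen ε l) xwy = 2 + ε := by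
      simp [xwy, starlikeLen]
      ring
    refine ⟨_, _, xwy, ⟨by simp [xwy], ?_⟩, by linarith, by linarith, ?_⟩
    · rw [hlen, dist_eq_treeDist hε₀.le hd]
      simp [treeDist, depth, meet]
      ring
    · intro h hh hsupp
      simp only [xwy, Walk.support_cons, Walk.support_nil, List.mem_cons, List.not_mem_nil,
        or_false] at hsupp
      rcases hsupp with rfl | rfl | rfl <;> simp_all [mem_starlikeSPC_iff, branchHub]

lemma starlikeSPC_inter_cball_subset (hε₀ : 0 < ε)
    (hd : IsShortestPathMetric (starlike l) (starlikeLen ε l) d) (t : StarV l) :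
    starlikeSPC l ∩ cball d t 4 ⊆ {none, branchHub t} := by
  rintro (_ | ⟨i, j⟩) ⟨hmem, hball : d _ t ≤ 4⟩
  · exact Or.inl rfl
  obtain rfl : j = 1 := eq_one_of_some_mem_starlikeSPC hmem
  by_contra hne
  rw [dist_eq_treeDist hε₀.le hd] at hball
  have ht : branchHub t ≠ some (i, 1) := fun ht => hne (Or.inr ht.symm)
  linarith [four_lt_treeDist_hub hε₀ ht]

lemma locallySparse_starlikeSPC (hε₀ : 0 < ε)
    (hd : IsShortestPathMetric (starlike l) (starlikeLen ε l) d) :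
    LocallySparse d 4 2 2 (starlikeSPC l) := by
  intro t
  norm_num only
  calc (starlikeSPC l ∩ cball d t 4).ncard ≤ ({none, branchHub t} : Set (StarV l)).ncard :=
        Set.ncard_le_ncard (starlikeSPC_inter_cball_subset hε₀ hd t)
    _ ≤ 2 := (Set.ncard_insert_le _ _).trans (by simp)

lemma ncard_starlikeSPC : (starlikeSPC l).ncard = l + 1 := by
  have hrange : {h : StarV l | ∃ i : Fin l, h = some (i, 1)} = Set.range fun i => some (i, 1) := by
    ext
    simp [eq_comm]
  have hinj : Function.Injective fun i : Fin l => (some (i, 1) : StarV l) := by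
    intro i k h
    simpa using h
  rw [starlikeSPC, Set.ncard_insert_of_notMem (by simp), hrange,
    Set.ncard_range_of_injective hinj, Nat.card_eq_fintype_card, Fintype.card_fin]

lemma exists_mem_cball_center_dist_le (hε₀ : 0 ≤ ε) (hε : ε ≤ 2)
    (hd : IsShortestPathMetric (starlike l) (starlikeLen ε l) d) :
    ∀ h ∈ starlikeSPC l, ∃ z ∈ cball d none 4, d h z ≤ 4 := by
  rintro (_ | ⟨i, j⟩) hmem
  · exact ⟨none, by simp [cball, dist_eq_treeDist hε₀ hd], by simp [dist_eq_treeDist hε₀ hd]⟩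
  · obtain rfl : j = 1 := eq_one_of_some_mem_starlikeSPC hmem
    refine ⟨some (i, 0), ?_, ?_⟩ <;>
      simp [cball, dist_eq_treeDist hε₀ hd, treeDist, depth, meet]
    linarith

end Starlike

/-- Lemma 45 of the paper: for every `l ≥ 1` and all sufficiently
small `ε > 0`, the star-like graph `G_{l,ε}` has highway dimension `2` according to
the ball-intersection definition of Abraham et al. 2011, while for the scale `r = 2`
(with `c = 4`) the set `{v, w_1, …, w_l}` is a minimal, locally `2`-sparse shortest
path cover of `l + 1` hubs, each at distance at most `2r` from some vertex of the
ball `B_{2r}(v)`. -/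
theorem statement16 (l : ℕ) (hl : 1 ≤ l) :
    ∃ ε₀ : ℝ, 0 < ε₀ ∧ ∀ ε : ℝ, 0 < ε → ε ≤ ε₀ →
      ∀ d : StarV l → StarV l → ℝ,
        IsShortestPathMetric (starlike l) (starlikeLen ε l) d →
        ((∀ r : ℝ, 0 < r → ∀ t : StarV l,
            ∃ H : Set (StarV l), H.ncard ≤ 2 ∧
              ∀ (a b : StarV l) (w : (starlike l).Walk a b),
                IsShortestPath (starlikeLen ε l) d w →
                r < wlen (starlikeLen ε l) w → wlen (starlikeLen ε l) w ≤ 2 * r →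
                (∃ x ∈ w.support, x ∈ cball d t (2 * r)) →
                ∃ h ∈ H, h ∈ w.support) ∧
          IsMinimalSPC (starlike l) (starlikeLen ε l) d 4 2 (starlikeSPC l) ∧
          LocallySparse d 4 2 2 (starlikeSPC l) ∧
          (starlikeSPC l).ncard = l + 1 ∧
          (∀ h ∈ starlikeSPC l,
            ∃ z ∈ cball d (none : StarV l) (2 * 2), d h z ≤ 2 * 2)) := by
  refine ⟨1 / 3, by norm_num, fun ε hε₀ hε d hd => ⟨?_, ?_, ?_, ?_, ?_⟩⟩
  · intro r hr t
    refine ⟨{none, Starlike.branchHub t}, (Set.ncard_insert_le _ _).trans (by simp), ?_⟩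
    intro a b w hw hlen _ hnear
    rcases Starlike.center_or_branchHub_mem_support hε₀.le hε hd hr t hw hlen hnear with h | h
    · exact ⟨_, Set.mem_insert _ _, h⟩
    · exact ⟨_, Set.mem_insert_of_mem _ rfl, h⟩
  · exact Starlike.isMinimalSPC_starlikeSPC hl hε₀ (by linarith) hd
  · exact Starlike.locallySparse_starlikeSPC hε₀ hd
  · exact Starlike.ncard_starlikeSPC
  · norm_num only
    exact Starlike.exists_mem_cball_center_dist_le hε₀.le (by linarith) hd
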